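/- arXiv:1101.3492 — 2 statements merged into one kernel-verified Lean document; each statement's English description precedes it below -/
import Mathlib

section
/- The deformed Green's operators given by the explicit geometric-type formula are two-sided inverses of the deformed wave operator on A[[λ]]: the ℝ[[λ]]-linear maps Δ_⋆± := Σ_n λⁿ Δ_(n)± : A[[λ]] → B[[λ]] satisfy P_⋆(Δ_⋆±(φ)) = φ and Δ_⋆±(P_⋆(φ)) = φ for every φ ∈ A[[λ]]. -/
open Finset

noncomputable section

namespace NCQFT

/-- The `ℝ[[λ]]`-linear map `V[[λ]] → W[[λ]]` induced by a family `F_(n)` of `ℝ`-linear maps,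
`F_⋆ = Σ λⁿ F_(n)`, i.e. `(F_⋆ u)_(n) = Σ_{m+k=n} F_(m)(u_(k))`. -/
def starFun {V W : Type*} [AddCommGroup V] [Module ℝ V] [AddCommGroup W] [Module ℝ W]
    (F : ℕ → V →ₗ[ℝ] W) (u : ℕ → V) : ℕ → W :=
  fun n => ∑ p ∈ antidiagonal n, F p.1 (u p.2)

variable {B : Type*} [AddCommGroup B] [Module ℝ B]

/-- `chain D Pn [j₁, …, j_k] = D ∘ P_(j₁) ∘ D ∘ P_(j₂) ∘ ⋯ ∘ D ∘ P_(j_k) ∘ D`. -/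
def chain (D : B →ₗ[ℝ] B) (Pn : ℕ → B →ₗ[ℝ] B) : List ℕ → (B →ₗ[ℝ] B)
  | [] => D
  | j :: t => D ∘ₗ Pn j ∘ₗ chain D Pn t

/-- The `n`-th coefficient `Δ_(n)±` of the deformed Green's operator:
`Δ_(n)± = Σ_{k=1}^{n} Σ_{j₁+⋯+j_k = n, jᵢ ≥ 1} (−1)^k Δ_± ∘ P_(j₁) ∘ Δ_± ∘ P_(j₂) ∘ ⋯ ∘ Δ_± ∘ P_(j_k) ∘ Δ_±`,
realized as a sum over all compositions `(j₁, …, j_k)` of `n` (for `n = 0` it equals `Δ_±`). -/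
def dGreen (D : B →ₗ[ℝ] B) (Pn : ℕ → B →ₗ[ℝ] B) (n : ℕ) : B →ₗ[ℝ] B :=
  ∑ c : Composition n, ((-1 : ℝ) ^ c.blocks.length) • chain D Pn c.blocks

end NCQFT

namespace NCQFT

section Aux

variable {B : Type*} [AddCommGroup B] [Module ℝ B]

-- triple sum associativity
lemma sum_ad_assoc {M : Type*} [AddCommMonoid M] (f : ℕ → ℕ → ℕ → M) (n : ℕ) :
    ∑ p ∈ antidiagonal n, ∑ q ∈ antidiagonal p.2, f p.1 q.1 q.2 =
    ∑ p ∈ antidiagonal n, ∑ q ∈ antidiagonal p.1, f q.1 q.2 p.2 := by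
  rw [Finset.sum_sigma', Finset.sum_sigma']
  refine Finset.sum_nbij' (i := fun x => ⟨(x.1.1 + x.2.1, x.2.2), (x.1.1, x.2.1)⟩)
    (j := fun x => ⟨(x.2.1, x.2.2 + x.1.2), (x.2.2, x.1.2)⟩) ?_ ?_ ?_ ?_ ?_ <;>
    rintro ⟨⟨a, b⟩, ⟨c, d⟩⟩ hx <;>
    simp only [Finset.mem_sigma, Finset.HasAntidiagonal.mem_antidiagonal, Sigma.ext_iff, Prod.mk.injEq,
      heq_eq_eq] at hx ⊢ <;>
    obtain ⟨h1, h2⟩ := hx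
  · exact ⟨by omega, trivial⟩
  · exact ⟨by omega, trivial⟩
  · exact ⟨⟨trivial, h2⟩, trivial⟩
  · exact ⟨⟨h2, trivial⟩, trivial⟩

lemma dGreen_zero (D : B →ₗ[ℝ] B) (Pn : ℕ → B →ₗ[ℝ] B) : dGreen D Pn 0 = D := by
  have h : ∀ c : Composition 0, c.blocks = [] := by
    intro c
    cases hb : c.blocks with
    | nil => rfl
    | cons j t =>
      have h1 : 0 < j := c.blocks_pos (by rw [hb]; exact List.mem_cons_self)
      have h2 := c.blocks_sum
      rw [hb, List.sum_cons] at h2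
      omega
  haveI : Unique (Composition 0) :=
    { default := ⟨[], by intro i hi; simp at hi, rfl⟩
      uniq := fun c => by ext1; rw [h c] }
  rw [dGreen, Finset.univ_unique, Finset.sum_singleton]
  simp [h, chain]

lemma dGreen_succ (D : B →ₗ[ℝ] B) (Pn : ℕ → B →ₗ[ℝ] B) (n : ℕ) :
    dGreen D Pn (n + 1)
      = ∑ x ∈ (Finset.range (n + 1)).sigma
            (fun j => (Finset.univ : Finset (Composition (n - j)))),
          ((-1 : ℝ) ^ (x.2.blocks.length + 1)) • chain D Pn ((x.1 + 1) :: x.2.blocks) := by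
  rw [dGreen]
  refine (Finset.sum_bij (i := fun (x : Σ j : ℕ, Composition (n - j)) hx =>
    (⟨(x.1 + 1) :: x.2.blocks, ?_, ?_⟩ : Composition (n + 1))) ?_ ?_ ?_ ?_).symm
  · intro i hi
    rcases List.mem_cons.mp hi with h | h
    · omega
    · exact x.2.blocks_pos h
  · simp only [Finset.mem_sigma, Finset.mem_range] at hx
    have := x.2.blocks_sum
    rw [List.sum_cons]
    omega
  · intro a ha; exact Finset.mem_univ _
  · rintro ⟨j₁, c₁⟩ h₁ ⟨j₂, c₂⟩ h₂ h
    have hb : (j₁ + 1) :: c₁.blocks = (j₂ + 1) :: c₂.blocks := congrArg Composition.blocks h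
    have hj : j₁ = j₂ := by injection hb with h1 _; omega
    subst hj
    simp only [List.cons.injEq, true_and] at hb
    exact Sigma.ext rfl (heq_of_eq (Composition.ext hb))
  · rintro ⟨bl, hpos, hsum⟩ -
    cases bl with
    | nil => simp at hsum
    | cons j t =>
      have hj : 0 < j := hpos List.mem_cons_self
      rw [List.sum_cons] at hsum
      refine ⟨⟨j - 1, ⟨t, fun hi => hpos (List.mem_cons_of_mem _ hi), by omega⟩⟩, ?_, ?_⟩
      · simp only [Finset.mem_sigma, Finset.mem_range, Finset.mem_univ, and_true]
        omega
      · ext1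
        simp only
        congr 1
        omega
  · rintro ⟨j, c⟩ h
    simp [List.length_cons]

lemma dGreen_succ_apply (D : B →ₗ[ℝ] B) (Pn : ℕ → B →ₗ[ℝ] B) (n : ℕ) (x : B) :
    dGreen D Pn (n + 1) x
      = -∑ j ∈ Finset.range (n + 1), D (Pn (j + 1) (dGreen D Pn (n - j) x)) := by
  rw [dGreen_succ, Finset.sum_sigma, ← Finset.sum_neg_distrib, LinearMap.sum_apply]
  refine Finset.sum_congr rfl fun j _ => ?_
  rw [dGreen]
  simp only [LinearMap.sum_apply, LinearMap.smul_apply, map_sum, map_smul,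
    ← Finset.sum_neg_distrib]
  refine Finset.sum_congr rfl fun c _ => ?_
  simp [chain, pow_succ, mul_comm, neg_smul]

lemma key_right (A : Submodule ℝ B) (Pn : ℕ → B →ₗ[ℝ] B)
    (hPpos : ∀ n, 0 < n → ∀ u : B, Pn n u ∈ A)
    (D : B →ₗ[ℝ] B) (hPD : ∀ a ∈ A, Pn 0 (D a) = a)
    (n : ℕ) (x : B) (hx : x ∈ A) :
    ∑ p ∈ antidiagonal n, Pn p.1 (dGreen D Pn p.2 x) = if n = 0 then x else 0 := by
  cases n with
  | zero =>
    simp [dGreen_zero, hPD x hx]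
  | succ n =>
    rw [Finset.Nat.sum_antidiagonal_succ]
    simp only [Nat.succ_ne_zero, if_false]
    have h1 : Pn 0 (dGreen D Pn (n + 1) x)
        = -∑ j ∈ Finset.range (n + 1), Pn (j + 1) (dGreen D Pn (n - j) x) := by
      rw [dGreen_succ_apply, map_neg, map_sum]
      exact congrArg Neg.neg (Finset.sum_congr rfl fun j _ =>
        hPD _ (hPpos (j + 1) (Nat.succ_pos j) _))
    have h2 : ∑ p ∈ antidiagonal n, Pn (p.1 + 1) (dGreen D Pn p.2 x)
        = ∑ j ∈ Finset.range (n + 1), Pn (j + 1) (dGreen D Pn (n - j) x) :=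
      Finset.Nat.sum_antidiagonal_eq_sum_range_succ (fun a b => Pn (a + 1) (dGreen D Pn b x)) n
    rw [h1, h2, neg_add_cancel]

lemma key_left (A : Submodule ℝ B) (Pn : ℕ → B →ₗ[ℝ] B)
    (hPA : ∀ a ∈ A, Pn 0 a ∈ A)
    (D : B →ₗ[ℝ] B) (hDP : ∀ a ∈ A, D (Pn 0 a) = a)
    (x : B) (hx : x ∈ A) :
    ∀ n, ∑ p ∈ antidiagonal n, dGreen D Pn p.1 (Pn p.2 x) = if n = 0 then x else 0 := by
  intro n
  induction n using Nat.strong_induction_on with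
  | _ n ih =>
    match n with
    | 0 => simp [dGreen_zero, hDP x hx]
    | (n + 1) =>
      rw [Finset.Nat.sum_antidiagonal_succ]
      simp only [Nat.succ_ne_zero, if_false, dGreen_zero]
      have h2 : ∑ p ∈ antidiagonal n, dGreen D Pn (p.1 + 1) (Pn p.2 x)
          = ∑ p ∈ antidiagonal n, ∑ q ∈ antidiagonal p.1,
              -D (Pn (q.1 + 1) (dGreen D Pn q.2 (Pn p.2 x))) := by
        refine Finset.sum_congr rfl fun p _ => ?_
        rw [dGreen_succ_apply, ← Finset.sum_neg_distrib]
        exact (Finset.Nat.sum_antidiagonal_eq_sum_range_succ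
          (fun a b => -D (Pn (a + 1) (dGreen D Pn b (Pn p.2 x)))) p.1).symm
      rw [h2, ← sum_ad_assoc (fun a b c => -D (Pn (a + 1) (dGreen D Pn b (Pn c x)))) n]
      have h3 : ∀ p ∈ antidiagonal n,
          ∑ q ∈ antidiagonal p.2, -D (Pn (p.1 + 1) (dGreen D Pn q.1 (Pn q.2 x)))
            = -D (Pn (p.1 + 1) (if p.2 = 0 then x else 0)) := by
        intro p hp
        rw [← ih p.2 (by rw [Finset.HasAntidiagonal.mem_antidiagonal] at hp; omega)]
        rw [map_sum, map_sum, ← Finset.sum_neg_distrib]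
      rw [Finset.sum_congr rfl h3]
      rw [Finset.sum_eq_single_of_mem (n, 0)
        (by simp) (fun b hb hne => by
          rw [Finset.HasAntidiagonal.mem_antidiagonal] at hb
          have : b.2 ≠ 0 := fun h => hne (by
            have : b.1 = n := by omega
            exact Prod.ext this h)
          rw [if_neg this, map_zero, map_zero, neg_zero])]
      simp

lemma inverses (A : Submodule ℝ B) (Pn : ℕ → B →ₗ[ℝ] B)
    (hPA : ∀ a ∈ A, Pn 0 a ∈ A)
    (hPpos : ∀ n, 0 < n → ∀ u : B, Pn n u ∈ A)
    (D : B →ₗ[ℝ] B)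
    (hPD : ∀ a ∈ A, Pn 0 (D a) = a) (hDP : ∀ a ∈ A, D (Pn 0 a) = a)
    (φ : ℕ → B) (hφ : ∀ n, φ n ∈ A) :
    starFun Pn (starFun (dGreen D Pn) φ) = φ ∧
    starFun (dGreen D Pn) (starFun Pn φ) = φ := by
  have collapse : ∀ n, ∑ p ∈ antidiagonal n, (if p.1 = 0 then φ p.2 else 0) = φ n := by
    intro n
    rw [Finset.sum_eq_single_of_mem (0, n) (by simp)
      (fun b hb hne => by
        rw [Finset.HasAntidiagonal.mem_antidiagonal] at hb
        have : b.1 ≠ 0 := fun h => hne (by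
          have : b.2 = n := by omega
          exact Prod.ext h this)
        rw [if_neg this])]
    simp
  constructor <;> funext n
  · show ∑ p ∈ antidiagonal n, Pn p.1 (∑ q ∈ antidiagonal p.2, dGreen D Pn q.1 (φ q.2)) = φ n
    have : ∀ p : ℕ × ℕ, Pn p.1 (∑ q ∈ antidiagonal p.2, dGreen D Pn q.1 (φ q.2))
        = ∑ q ∈ antidiagonal p.2, Pn p.1 (dGreen D Pn q.1 (φ q.2)) := fun p => map_sum _ _ _
    rw [Finset.sum_congr rfl fun p _ => this p,
      sum_ad_assoc (fun a b c => Pn a (dGreen D Pn b (φ c))) n]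
    rw [Finset.sum_congr rfl fun p _ => key_right A Pn hPpos D hPD p.1 (φ p.2) (hφ p.2)]
    exact collapse n
  · show ∑ p ∈ antidiagonal n, dGreen D Pn p.1 (∑ q ∈ antidiagonal p.2, Pn q.1 (φ q.2)) = φ n
    have : ∀ p : ℕ × ℕ, dGreen D Pn p.1 (∑ q ∈ antidiagonal p.2, Pn q.1 (φ q.2))
        = ∑ q ∈ antidiagonal p.2, dGreen D Pn p.1 (Pn q.1 (φ q.2)) := fun p => map_sum _ _ _
    rw [Finset.sum_congr rfl fun p _ => this p,
      sum_ad_assoc (fun a b c => dGreen D Pn a (Pn b (φ c))) n]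
    rw [Finset.sum_congr rfl fun p _ => key_left A Pn hPA D hDP (φ p.2) (hφ p.2) p.1]
    exact collapse n

end Aux

/-- the deformed Green's operators `Δ_⋆± = Σ λⁿ Δ_(n)±` (with `Δ_(n)±` given by the
explicit geometric-type formula `dGreen`) are two-sided inverses of the deformed wave operator
`P_⋆ = Σ λⁿ P_(n)` on `A[[λ]]`: `P_⋆(Δ_⋆±(φ)) = φ` and `Δ_⋆±(P_⋆(φ)) = φ` for all `φ ∈ A[[λ]]`. -/

theorem statement_0
    {B : Type*} [AddCommGroup B] [Module ℝ B] (A : Submodule ℝ B)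
    -- the family `P_(n)` (`P := P_(0)`), with `P(A) ⊆ A` and `P_(n) : B → A` for `n ≥ 1`
    (Pn : ℕ → B →ₗ[ℝ] B)
    (hPA : ∀ a ∈ A, Pn 0 a ∈ A)
    (hPpos : ∀ n, 0 < n → ∀ u : B, Pn n u ∈ A)
    -- the undeformed retarded/advanced Green's operators `Δ_±` (defined on `A`)
    (Dp Dm : B →ₗ[ℝ] B)
    (hPDp : ∀ a ∈ A, Pn 0 (Dp a) = a) (hDpP : ∀ a ∈ A, Dp (Pn 0 a) = a)
    (hPDm : ∀ a ∈ A, Pn 0 (Dm a) = a) (hDmP : ∀ a ∈ A, Dm (Pn 0 a) = a)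
    -- `φ ∈ A[[λ]]`
    (φ : ℕ → B) (hφ : ∀ n, φ n ∈ A) :
    starFun Pn (starFun (dGreen Dp Pn) φ) = φ ∧
    starFun (dGreen Dp Pn) (starFun Pn φ) = φ ∧
    starFun Pn (starFun (dGreen Dm Pn) φ) = φ ∧
    starFun (dGreen Dm Pn) (starFun Pn φ) = φ := by
  obtain ⟨h1, h2⟩ := inverses A Pn hPA hPpos Dp hPDp hDpP φ hφ
  obtain ⟨h3, h4⟩ := inverses A Pn hPA hPpos Dm hPDm hDmP φ hφ
  exact ⟨h1, h2, h3, h4⟩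

end NCQFT
end
end

section
/- Each coefficient map of the recursively defined square root is symmetric with respect to ω: for every n ≥ 0 and all φ, ψ ∈ V, ω(φ, S_(n)(ψ)) = ω(S_(n)(φ), ψ). -/
open Finset

noncomputable section

namespace NCQFT

variable {V : Type*} [AddCommGroup V] [Module ℝ V]

/-- The recursively defined coefficients of the formal square root `𝐒` of `K = Σ λⁿ K_(n)`:
`S_(0) = id`, `S_(1) = ½ K_(1)`, `S_(n) = ½ (K_(n) − Σ_{m=1}^{n−1} S_(m) ∘ S_(n−m))`, `n ≥ 2`. -/
def sqrtCoef (Kf : ℕ → V →ₗ[ℝ] V) : ℕ → V →ₗ[ℝ] V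
  | 0 => LinearMap.id
  | 1 => (1 / 2 : ℝ) • Kf 1
  | n + 2 =>
    (1 / 2 : ℝ) • (Kf (n + 2) -
      ∑ m ∈ (Finset.Ioo 0 (n + 2)).attach,
        sqrtCoef Kf m.1 ∘ₗ sqrtCoef Kf (n + 2 - m.1))
  decreasing_by
  · have := m.2; simp only [Finset.mem_Ioo] at this; omega
  · have := m.2; simp only [Finset.mem_Ioo] at this; omega

/-- The `ℝ[[λ]]`-bilinear extension of a bilinear form `ω : V × V → ℝ` to `V[[λ]]`. -/
def omegaSeries (ω : V →ₗ[ℝ] V →ₗ[ℝ] ℝ) (u v : ℕ → V) : PowerSeries ℝ :=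
  PowerSeries.mk fun n => ∑ p ∈ antidiagonal n, ω (u p.1) (v p.2)

/-- each coefficient map of the recursively defined square root is symmetric
with respect to `ω`: for every `n ≥ 0` and all `φ, ψ ∈ V`,
`ω(φ, S_(n)(ψ)) = ω(S_(n)(φ), ψ)`. -/
theorem statement_8
    (Kf : ℕ → V →ₗ[ℝ] V) (hK0 : Kf 0 = LinearMap.id)
    (ω : V →ₗ[ℝ] V →ₗ[ℝ] ℝ)
    (hωanti : ∀ x y : V, ω x y = - ω y x)
    -- the deformed form `ω̂(φ, ψ) = ω(φ, K(ψ))` is antisymmetric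
    (hhat : ∀ u v : ℕ → V,
      omegaSeries ω u (starFun Kf v) = - omegaSeries ω v (starFun Kf u)) :
    ∀ (n : ℕ) (φ ψ : V), ω φ (sqrtCoef Kf n ψ) = ω (sqrtCoef Kf n φ) ψ := by
  -- delta sequence
  have hstar : ∀ (x : V) (n : ℕ),
      starFun Kf (fun m => if m = 0 then x else 0) n = Kf n x := by
    intro x n
    rw [starFun, Finset.sum_eq_single (n, 0)]
    · simp
    · rintro ⟨a, b⟩ hab hne
      simp only [Finset.HasAntidiagonal.mem_antidiagonal] at hab
      have : b ≠ 0 := by rintro rfl; exact hne (by simp [← hab])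
      simp [this]
    · simp
  have Ksym : ∀ (n : ℕ) (φ ψ : V), ω φ (Kf n ψ) = ω (Kf n φ) ψ := by
    intro n φ ψ
    have h := congrArg (PowerSeries.coeff (R := ℝ) n)
      (hhat (fun m => if m = 0 then φ else 0) (fun m => if m = 0 then ψ else 0))
    simp only [omegaSeries, PowerSeries.coeff_mk, map_neg] at h
    rw [Finset.sum_eq_single (0, n), Finset.sum_eq_single (0, n)] at h
    · simp only [hstar, if_true, reduceIte] at h
      rw [h, hωanti ψ (Kf n φ), neg_neg]
    · rintro ⟨a, b⟩ hab hne
      simp only [Finset.HasAntidiagonal.mem_antidiagonal] at hab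
      have : a ≠ 0 := by rintro rfl; exact hne (by simp [← hab])
      simp [this]
    · simp
    · rintro ⟨a, b⟩ hab hne
      simp only [Finset.HasAntidiagonal.mem_antidiagonal] at hab
      have : a ≠ 0 := by rintro rfl; exact hne (by simp [← hab])
      simp [this]
    · simp
  intro n
  induction n using Nat.strong_induction_on with
  | _ n ih =>
    match n, ih with
    | 0, _ => intro φ ψ; simp [sqrtCoef]
    | 1, _ =>
      intro φ ψ
      simp only [sqrtCoef, LinearMap.smul_apply, map_smul, LinearMap.smul_apply,
        smul_eq_mul]
      rw [Ksym]
    | (n+2), ih =>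
      intro φ ψ
      simp only [sqrtCoef, LinearMap.smul_apply, LinearMap.sub_apply, LinearMap.sum_apply,
        LinearMap.coe_comp, Function.comp_apply, map_smul, map_sub, map_sum,
        LinearMap.smul_apply, LinearMap.sub_apply, LinearMap.sum_apply, smul_eq_mul]
      congr 1
      rw [Ksym]
      congr 1
      rw [Finset.sum_attach _ (fun m => ω φ (sqrtCoef Kf m (sqrtCoef Kf (n+2-m) ψ))),
        Finset.sum_attach _ (fun m => ω (sqrtCoef Kf m (sqrtCoef Kf (n+2-m) φ)) ψ)]
      refine Finset.sum_nbij' (fun m => n+2-m) (fun m => n+2-m) ?_ ?_ ?_ ?_ ?_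
      · intro a ha; simp only [mem_Ioo] at *; omega
      · intro a ha; simp only [mem_Ioo] at *; omega
      · intro a ha; simp only [mem_Ioo] at ha; show n+2-(n+2-a)=a; omega
      · intro a ha; simp only [mem_Ioo] at ha; show n+2-(n+2-a)=a; omega
      · intro a ha
        simp only [mem_Ioo] at ha
        have h1 : n + 2 - (n + 2 - a) = a := by omega
        rw [h1, ih a (by omega), ih (n+2-a) (by omega)]


end NCQFT
end
end
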